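/- arXiv:0802.4304 — 3 statements merged into one kernel-verified Lean document; each statement's English description precedes it below -/
import Mathlib

section
/- Let G be a group acting on a uniform space X. If the action is uniformly properly discontinuous, i.e., there exists an entourage E of X such that for all x ∈ X and g ∈ G, (x, g·x) ∈ E implies g = 1, then the projection p: X → X/G has the uniqueness of chain lifts property: there is an entourage F of X such that any two F-chains originating at the same point with equal images under p are equal. -/
open scoped Uniformity

/-- Symmetric relation (as in the older Mathlib, where `SymmetricRel` was defined this way). -/
def SymmetricRel {α : Type*} (V : Set (α × α)) : Prop :=
  Prod.swap ⁻¹' V = V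

/-- An `E`-chain: consecutive members of the list are `E`-related. -/
def ChainIn {α : Type*} (E : Set (α × α)) (c : List α) : Prop :=
  c.Chain' fun a b => (a, b) ∈ E

/-- The image `f(E)` of a relation under a map. -/
def imgRel {α β : Type*} (f : α → β) (E : Set (α × α)) : Set (β × β) :=
  Prod.map f f '' E

/-- The orbit projection `p : X → X/G`. -/
def proj (G X : Type*) [Group G] [MulAction G X] :
    X → Quotient (MulAction.orbitRel G X) :=
  Quotient.mk (MulAction.orbitRel G X)

/-- `G_F`: the subgroup of `G` generated by `S_F = {h | (x, h • x) ∈ F for some x}`. -/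
def GF (G : Type*) {X : Type*} [Group G] [MulAction G X] (F : Set (X × X)) : Subgroup G :=
  Subgroup.closure {h : G | ∃ x : X, (x, h • x) ∈ F}

/-- Chain lifting property for `f : X → Y`: for every (symmetric) entourage `E` of `X`
there is an entourage `F` such that every `f(F)`-chain starting at `f x₀` lifts to an
`E`-chain starting at `x₀`. -/
def HasChainLifting {X Y : Type*} [UniformSpace X] (f : X → Y) : Prop :=
  ∀ E ∈ 𝓤 X, SymmetricRel E → ∃ F ∈ 𝓤 X, SymmetricRel F ∧
    ∀ (x₀ : X) (d : List Y), ChainIn (imgRel f F) d → d.head? = some (f x₀) →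
      ∃ c : List X, ChainIn E c ∧ c.head? = some x₀ ∧ c.map f = d

/-- Uniqueness of chain lifts: there is an entourage `F` such that two `F`-chains with the
same origin and the same image are equal. -/
def HasUniqueChainLifts {X Y : Type*} [UniformSpace X] (f : X → Y) : Prop :=
  ∃ F ∈ 𝓤 X, SymmetricRel F ∧
    ∀ α β : List X, ChainIn F α → ChainIn F β →
      α.head? = β.head? → α.map f = β.map f → α = β

/-- Approximate uniqueness of chain lifts: for every entourage `E` there is an entourage `F`
such that two `F`-chains with the same origin and the same image are `E`-close. -/
def HasApproxUniqueChainLifts {X Y : Type*} [UniformSpace X] (f : X → Y) : Prop :=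
  ∀ E ∈ 𝓤 X, SymmetricRel E → ∃ F ∈ 𝓤 X, SymmetricRel F ∧
    ∀ α β : List X, ChainIn F α → ChainIn F β →
      α.head? = β.head? → α.map f = β.map f →
        List.Forall₂ (fun a b => (a, b) ∈ E) α β

/-- Neutral action. -/
def Neutral (G X : Type*) [Group G] [MulAction G X] [UniformSpace X] : Prop :=
  ∀ E ∈ 𝓤 X, SymmetricRel E → ∃ F ∈ 𝓤 X, SymmetricRel F ∧
    ∀ (x y : X) (h : G), (x, h • y) ∈ F → ∃ g : G, (g • x, y) ∈ E

/-- Uniformly properly discontinuous action. -/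
def UnifProperlyDiscontinuous (G X : Type*) [Group G] [MulAction G X] [UniformSpace X] : Prop :=
  ∃ E ∈ 𝓤 X, SymmetricRel E ∧ ∀ (x : X) (g : G), (x, g • x) ∈ E → g = 1

/-- Equicontinuous action. -/
def EquicontinuousAction (G X : Type*) [Group G] [MulAction G X] [UniformSpace X] : Prop :=
  ∀ E ∈ 𝓤 X, ∃ F ∈ 𝓤 X, ∀ (g : G) (x y : X), (x, y) ∈ F → (g • x, g • y) ∈ E

/-- Small scale uniformly continuous action. -/
def SSUnifCont (G X : Type*) [Group G] [MulAction G X] [UniformSpace X] : Prop :=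
  ∀ E ∈ 𝓤 X, SymmetricRel E → ∃ F ∈ 𝓤 X, SymmetricRel F ∧
    ∀ g ∈ GF G F, {q : X × X | (g • q.1, g • q.2) ∈ E} ∈ 𝓤 X

/-- Small scale uniformly equicontinuous action. -/
def SSUnifEquicont (G X : Type*) [Group G] [MulAction G X] [UniformSpace X] : Prop :=
  ∀ E ∈ 𝓤 X, SymmetricRel E → ∃ F ∈ 𝓤 X, SymmetricRel F ∧
    ∀ g ∈ GF G F, ∀ x y : X, (x, y) ∈ F → (g • x, g • y) ∈ E

/-- Small scale bounded orbits: the orbits of `G_F` are `E`-bounded. -/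
def SSBoundedOrbits (G X : Type*) [Group G] [MulAction G X] [UniformSpace X] : Prop :=
  ∀ E ∈ 𝓤 X, SymmetricRel E → ∃ F ∈ 𝓤 X, SymmetricRel F ∧
    ∀ x : X, ∀ g ∈ GF G F, ∀ g' ∈ GF G F, (g • x, g' • x) ∈ E

/-- Chain connected uniform space. -/
def ChainConnectedU (X : Type*) [UniformSpace X] : Prop :=
  ∀ E ∈ 𝓤 X, SymmetricRel E → ∀ x y : X,
    ∃ c : List X, ChainIn E c ∧ c.head? = some x ∧ c.getLast? = some y

section ChainLifts

variable {X Y : Type*} {F : Set (X × X)} {f : X → Y}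

theorem ChainIn.tail_eq_of_map_eq
    (hinj : ∀ a b b', (a, b) ∈ F → (a, b') ∈ F → f b = f b' → b = b') :
    ∀ {a : X} {as bs : List X}, ChainIn F (a :: as) → ChainIn F (a :: bs) →
      as.map f = bs.map f → as = bs
  | _, [], _, _, _, hmap => (List.map_eq_nil_iff.mp hmap.symm).symm
  | _, _ :: _, [], _, _, hmap => absurd hmap (by simp)
  | a, a' :: as, b' :: bs, hα, hβ, hmap => by
    obtain ⟨hfa', hmap'⟩ := List.cons_eq_cons.mp hmap
    obtain rfl : a' = b' :=
      hinj a a' b' (List.isChain_cons_cons.mp hα).1 (List.isChain_cons_cons.mp hβ).1 hfa'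
    rw [ChainIn.tail_eq_of_map_eq hinj hα.tail hβ.tail hmap']

theorem ChainIn.eq_of_head?_eq_of_map_eq
    (hinj : ∀ a b b', (a, b) ∈ F → (a, b') ∈ F → f b = f b' → b = b')
    {α β : List X} (hα : ChainIn F α) (hβ : ChainIn F β) (hhead : α.head? = β.head?)
    (hmap : α.map f = β.map f) : α = β := by
  match α, β, hhead with
  | [], [], _ => rfl
  | a :: as, _ :: bs, rfl =>
    rw [ChainIn.tail_eq_of_map_eq hinj hα hβ (List.cons_eq_cons.mp hmap).2]

end ChainLifts

theorem eq_of_mem_of_proj_eq {G X : Type*} [Group G] [MulAction G X] {E : Set (X × X)}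
    (hE : ∀ (x : X) (g : G), (x, g • x) ∈ E → g = 1) {x y : X} (hxy : (x, y) ∈ E)
    (hp : proj G X x = proj G X y) : x = y := by
  obtain ⟨g, rfl⟩ := MulAction.orbitRel_apply.mp (Quotient.exact hp.symm)
  change x = g • x
  rw [hE x g hxy, one_smul]

/-- A uniformly properly discontinuous action yields uniqueness of chain lifts for the
orbit projection. -/
theorem stmt1 (G X : Type*) [Group G] [MulAction G X] [UniformSpace X]
    (h : UnifProperlyDiscontinuous G X) :
    HasUniqueChainLifts (proj G X) := by
  obtain ⟨E, hE, -, hE1⟩ := h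
  obtain ⟨F, hF, hFs, hFE⟩ := comp_symm_mem_uniformity_sets hE
  refine ⟨F, hF, SetRel.inv_eq_self F, fun α β => ChainIn.eq_of_head?_eq_of_map_eq ?_⟩
  -- two `F`-steps from the same point land `E`-close, and `E` separates orbit points
  exact fun a b b' hab hab' => eq_of_mem_of_proj_eq hE1 (hFE ⟨a, SetRel.symm F hab, hab'⟩)
end

section
/- Let G be a group acting faithfully on a chain connected uniform space X, with the action small scale uniformly continuous. If the projection p: X → X/G has the uniqueness of chain lifts property, then the action is uniformly properly discontinuous. -/
open scoped Uniformity

/-!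
If `F` is an entourage of unique chain lifts for `p : X → X/G` and `(x, g • x) ∈ F`, then
`[x, g • x]` and `[x, x]` are `F`-chains with the same origin and image, so `g` fixes `x`.
If moreover `g⁻¹(F)` is an entourage, which small scale uniform continuity guarantees once
`g ∈ G_{F'}`, then for every `y` a chain `c` from `x` to `y` fine enough that both `c` and
`g • c` are `F`-chains is a second lift of `p(c)` from `x`; hence `g • c = c`, `g` fixes `y`,
and `g = 1` by faithfulness.
-/

lemma symmetricRel_iff_isSymm {α : Type*} {V : Set (α × α)} :
    SymmetricRel V ↔ SetRel.IsSymm V :=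
  SetRel.inv_eq_self_iff

lemma SymmetricRel.inter {α : Type*} {V W : Set (α × α)} (hV : SymmetricRel V)
    (hW : SymmetricRel W) : SymmetricRel (V ∩ W) := by
  unfold SymmetricRel at *
  rw [Set.preimage_inter, hV, hW]

section Chains

variable {α β : Type*}

lemma chainIn_pair {E : Set (α × α)} {a b : α} : ChainIn E [a, b] ↔ (a, b) ∈ E :=
  List.isChain_pair

lemma chainIn_map_iff (f : α → β) {E : Set (β × β)} {c : List α} :
    ChainIn E (c.map f) ↔ ChainIn (Prod.map f f ⁻¹' E) c :=
  List.isChain_map f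

lemma ChainIn.mono {E E' : Set (α × α)} {c : List α} (hc : ChainIn E c) (h : E ⊆ E') :
    ChainIn E' c :=
  List.IsChain.imp (fun _ _ hab => h hab) hc

lemma ChainConnectedU.exists_chainIn [UniformSpace α] (hcc : ChainConnectedU α)
    {W : Set (α × α)} (hW : W ∈ 𝓤 α) (x y : α) :
    ∃ c : List α, ChainIn W c ∧ c.head? = some x ∧ c.getLast? = some y := by
  obtain ⟨s, ⟨hs, hsymm⟩, hsW⟩ := UniformSpace.hasBasis_symmetric.mem_iff.1 hW
  obtain ⟨c, hc, hhead, hlast⟩ := hcc s hs (symmetricRel_iff_isSymm.2 hsymm) x y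
  exact ⟨c, hc.mono hsW, hhead, hlast⟩

end Chains

lemma proj_smul {G X : Type*} [Group G] [MulAction G X] (g : G) (x : X) :
    proj G X (g • x) = proj G X x :=
  Quotient.sound ⟨g, rfl⟩

def UniqueChainLiftsAt {X Y : Type*} (f : X → Y) (F : Set (X × X)) : Prop :=
  ∀ α β : List X, ChainIn F α → ChainIn F β → α.head? = β.head? → α.map f = β.map f → α = β

namespace UniqueChainLiftsAt

variable {X Y : Type*} {f : X → Y} {F : Set (X × X)} {φ : X → X}

lemma apply_eq_self_of_mem (hF : UniqueChainLiftsAt f F) (hφ : ∀ x, f (φ x) = f x) {x : X}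
    (hxx : (x, x) ∈ F) (hx : (x, φ x) ∈ F) : φ x = x := by
  have hlift : [x, φ x] = [x, x] :=
    hF _ _ (chainIn_pair.2 hx) (chainIn_pair.2 hxx) rfl (by simp [hφ])
  simpa using hlift

lemma apply_eq_self_of_apply_eq_self [UniformSpace X] (hF : UniqueChainLiftsAt f F)
    (hφ : ∀ x, f (φ x) = f x) (hcc : ChainConnectedU X) (hFφ : F ∩ Prod.map φ φ ⁻¹' F ∈ 𝓤 X)
    {x : X} (hx : φ x = x) (y : X) : φ y = y := by
  obtain ⟨c, hc, hhead, hlast⟩ := hcc.exists_chainIn hFφ x y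
  have hlift : c.map φ = c :=
    hF _ _ ((chainIn_map_iff φ).2 (hc.mono Set.inter_subset_right))
      (hc.mono Set.inter_subset_left) (by rw [List.head?_map, hhead, Option.map_some, hx])
      (by rw [List.map_map]; exact List.map_congr_left fun a _ => hφ a)
  have hlast' := congrArg List.getLast? hlift
  rw [List.getLast?_map, hlast, Option.map_some] at hlast'
  exact Option.some_injective _ hlast'

end UniqueChainLiftsAt

/-- For a faithful, small scale uniformly continuous action on a chain connected uniform
space, uniqueness of chain lifts for the projection implies the action is uniformly
properly discontinuous. -/
theorem stmt2 (G X : Type*) [Group G] [MulAction G X] [UniformSpace X]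
    (hcc : ChainConnectedU X)
    (hfaithful : ∀ g : G, (∀ x : X, g • x = x) → g = 1)
    (hss : SSUnifCont G X)
    (huniq : HasUniqueChainLifts (proj G X)) :
    UnifProperlyDiscontinuous G X := by
  obtain ⟨F, hF, hFsymm, hFuniq⟩ :
      ∃ F ∈ 𝓤 X, SymmetricRel F ∧ UniqueChainLiftsAt (proj G X) F := huniq
  obtain ⟨F', hF', hF'symm, hF'cont⟩ := hss F hF hFsymm
  refine ⟨F ∩ F', Filter.inter_mem hF hF', hFsymm.inter hF'symm,
    fun x g hxg => hfaithful g fun y => ?_⟩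
  have hgx : g • x = x :=
    hFuniq.apply_eq_self_of_mem (proj_smul g) (refl_mem_uniformity hF) hxg.1
  have hgF' : g ∈ GF G F' := Subgroup.subset_closure ⟨x, hxg.2⟩
  exact hFuniq.apply_eq_self_of_apply_eq_self (proj_smul g) hcc
    (Filter.inter_mem hF (hF'cont g hgF')) hgx y
end

section
/- Suppose G acts faithfully on a Hausdorff uniform space X. If the action has small scale bounded orbits, then the action is free: g·x = x for some x ∈ X implies g = 1. -/
open scoped Uniformity

theorem symmetricRel_symmetrize {α : Type*} (V : SetRel α α) :
    SymmetricRel (SetRel.symmetrize V) := by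
  ext ⟨a, b⟩
  simp [SetRel.symmetrize, and_comm]

theorem mem_GF_of_smul_eq {G X : Type*} [Group G] [MulAction G X] [UniformSpace X]
    {F : Set (X × X)} (hF : F ∈ 𝓤 X) {g : G} {x : X} (hgx : g • x = x) : g ∈ GF G F :=
  Subgroup.subset_closure ⟨x, by simpa [hgx] using refl_mem_uniformity hF⟩

theorem SSBoundedOrbits.exists_forall_mem_GF_smul_mem {G X : Type*} [Group G] [MulAction G X]
    [UniformSpace X] (h : SSBoundedOrbits G X) {E : Set (X × X)} (hE : E ∈ 𝓤 X) :
    ∃ F ∈ 𝓤 X, ∀ g ∈ GF G F, ∀ y : X, (y, g • y) ∈ E := by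
  obtain ⟨F, hF, -, horb⟩ :=
    h _ (symmetrize_mem_uniformity hE) (symmetricRel_symmetrize E)
  refine ⟨F, hF, fun g hg y => ?_⟩
  simpa using SetRel.symmetrize_subset_self (horb y 1 (GF G F).one_mem g hg)

theorem SSBoundedOrbits.smul_mem_of_smul_eq {G X : Type*} [Group G] [MulAction G X]
    [UniformSpace X] (h : SSBoundedOrbits G X) {g : G} {x : X} (hgx : g • x = x) (y : X) :
    ∀ E ∈ 𝓤 X, (y, g • y) ∈ E := by
  intro E hE
  obtain ⟨F, hF, hmove⟩ := h.exists_forall_mem_GF_smul_mem hE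
  exact hmove g (mem_GF_of_smul_eq hF hgx) y

/-- A faithful action with small scale bounded orbits on a Hausdorff uniform space
(the intersection of all entourages is the diagonal) is free. -/
theorem stmt7 (G X : Type*) [Group G] [MulAction G X] [UniformSpace X]
    (hHausdorff : ∀ x y : X, (∀ E ∈ 𝓤 X, (x, y) ∈ E) → x = y)
    (hfaithful : ∀ g : G, (∀ x : X, g • x = x) → g = 1)
    (h : SSBoundedOrbits G X) :
    ∀ (g : G) (x : X), g • x = x → g = 1 := by
  intro g x hgx
  exact hfaithful g fun y => (hHausdorff y (g • y) (h.smul_mem_of_smul_eq hgx y)).symm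
end
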